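/- arXiv:2003.12046 — 3 statements merged into one kernel-verified Lean document; each statement's English description precedes it below -/
import Mathlib

section
/- Let Δx > 0, let x_i ∈ ℝ, x_{i+1} = x_i + Δx, and x_{i+1/2} = x_i + Δx/2. Let f, g : ℝ → ℝ be three times continuously differentiable with |f'''(x)| ≤ M and |g'''(x)| ≤ M for all x ∈ [x_i, x_{i+1}]. Let x₀ ∈ (x_{i+1/2}, x_{i+1}], define the piecewise function ψ(x) = f(x) for x < x₀ and ψ(x) = g(x) for x ≥ x₀, set d⁺ = x_{i+1} − x₀, and for m = 0, 1, 2 let ⟦ψ^(m)⟧ = g^(m)(x₀) − f^(m)(x₀) denote the jumps in ψ and its derivatives at x₀. Then the jump-corrected two-point finite difference satisfies | f'(x_{i+1/2}) − [ (ψ(x_{i+1}) − ψ(x_i))/Δx − (1/Δx) Σ_{m=0}^{2} (d⁺)^m/m! · ⟦ψ^(m)⟧ ] | ≤ M·Δx². In other words, correcting the standard two-point difference by the truncated generalized Taylor series of the jumps recovers the one-sided derivative of the smooth piece f at the staggered evaluation point to second-order accuracy in Δx. -/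
/-!
Across the interface, the truncated Taylor series of the jumps turns `g (x_{i+1})` back into
`f (x_{i+1})` up to the Taylor remainders of `f` and `g` at `x₀`, each of size `M (d⁺)³ / 2` with
`d⁺ ≤ Δx / 2`. What is left is the plain slope of `f` on `[x_i, x_{i+1}]`, which approximates
`f'` at the midpoint to within `3/4 · M Δx²` (Taylor expansion of `f` and `f'` at `x_i`).
-/

open Finset Nat

open Set in
theorem norm_sub_taylorWithinEval_univ_le {E : Type*} [NormedAddCommGroup E] [NormedSpace ℝ E]
    {f : ℝ → E} {a x C : ℝ} {n : ℕ} (hf : ContDiff ℝ (n + 1) f) (hax : a ≤ x)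
    (hC : ∀ y ∈ Icc a x, ‖iteratedDeriv (n + 1) f y‖ ≤ C) :
    ‖f x - taylorWithinEval f n univ a x‖ ≤ C * (x - a) ^ (n + 1) / n ! := by
  rcases hax.eq_or_lt with rfl | hax
  · simp
  have hIcc : ∀ {k}, k ≤ n + 1 → ∀ y ∈ Icc a x,
      iteratedDerivWithin k f (Icc a x) y = iteratedDeriv k f y := fun hk y hy =>
    iteratedDerivWithin_eq_iteratedDeriv (uniqueDiffOn_Icc hax)
      (hf.contDiffAt.of_le (mod_cast hk)) hy
  have htaylor : taylorWithinEval f n univ a x = taylorWithinEval f n (Icc a x) a x := by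
    simp only [taylor_within_apply, iteratedDerivWithin_univ]
    refine sum_congr rfl fun k hk => ?_
    rw [hIcc (by simp at hk; omega) a (left_mem_Icc.mpr hax.le)]
  rw [htaylor]
  exact taylor_mean_remainder_bound hax.le hf.contDiffOn (right_mem_Icc.mpr hax.le)
    fun y hy => hIcc le_rfl y hy ▸ hC y hy

theorem sum_jump_eq_taylorWithinEval_sub (f g : ℝ → ℝ) (n : ℕ) (x₀ x : ℝ) :
    ∑ m ∈ range (n + 1),
        (x - x₀) ^ m / (m ! : ℝ) * (iteratedDeriv m g x₀ - iteratedDeriv m f x₀) =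
      taylorWithinEval g n Set.univ x₀ x - taylorWithinEval f n Set.univ x₀ x := by
  simp only [taylor_within_apply, iteratedDerivWithin_univ, smul_eq_mul, ← sum_sub_distrib]
  exact sum_congr rfl fun m _ => by ring

theorem abs_jump_corrected_sub_le {f g : ℝ → ℝ} {n : ℕ} {x₀ x C : ℝ}
    (hf : ContDiff ℝ (n + 1) f) (hg : ContDiff ℝ (n + 1) g) (hx : x₀ ≤ x)
    (hfC : ∀ y ∈ Set.Icc x₀ x, |iteratedDeriv (n + 1) f y| ≤ C)
    (hgC : ∀ y ∈ Set.Icc x₀ x, |iteratedDeriv (n + 1) g y| ≤ C) :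
    |(g x - ∑ m ∈ range (n + 1),
        (x - x₀) ^ m / (m ! : ℝ) * (iteratedDeriv m g x₀ - iteratedDeriv m f x₀)) - f x| ≤
      2 * (C * (x - x₀) ^ (n + 1) / n !) := by
  have hfR := norm_sub_taylorWithinEval_univ_le hf hx hfC
  have hgR := norm_sub_taylorWithinEval_univ_le hg hx hgC
  rw [Real.norm_eq_abs] at hfR hgR
  rw [sum_jump_eq_taylorWithinEval_sub]
  calc _ = |(g x - taylorWithinEval g n Set.univ x₀ x) -
          (f x - taylorWithinEval f n Set.univ x₀ x)| := by congr 1; ring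
    _ ≤ _ := (abs_sub _ _).trans (by linarith)

theorem abs_deriv_add_half_sub_slope_le {f : ℝ → ℝ} {a h M : ℝ} (hf : ContDiff ℝ 3 f)
    (hh : 0 < h) (hM : ∀ y ∈ Set.Icc a (a + h), |iteratedDeriv 3 f y| ≤ M) :
    |deriv f (a + h / 2) - (f (a + h) - f a) / h| ≤ 3 / 4 * M * h ^ 2 := by
  have hfR := norm_sub_taylorWithinEval_univ_le (n := 2) hf (by linarith : a ≤ a + h) hM
  have hdfR := norm_sub_taylorWithinEval_univ_le (n := 1) (hf.deriv' (n := 2))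
    (by linarith : a ≤ a + h / 2)
    fun y hy => (iteratedDeriv_succ' (n := 2) (f := f)) ▸
      hM y ⟨hy.1, hy.2.trans (by linarith)⟩
  simp only [Real.norm_eq_abs, taylor_within_apply, iteratedDerivWithin_univ, sum_range_succ,
    sum_range_zero, smul_eq_mul, iteratedDeriv_succ, iteratedDeriv_zero, add_sub_cancel_left,
    factorial] at hfR hdfR
  norm_num at hfR hdfR
  set Rf := f (a + h) - (f a + h * deriv f a + 1 / 2 * h ^ 2 * deriv (deriv f) a)
  set Rdf := deriv f (a + h / 2) - (deriv f a + h / 2 * deriv (deriv f) a)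
  have hsplit : deriv f (a + h / 2) - (f (a + h) - f a) / h = Rdf - Rf / h := by
    simp only [Rf, Rdf]
    field_simp
    ring
  calc |deriv f (a + h / 2) - (f (a + h) - f a) / h|
      ≤ |Rdf| + |Rf| / h := by
        rw [hsplit]; exact (abs_sub _ _).trans_eq (by rw [abs_div, abs_of_pos hh])
    _ ≤ M * (h / 2) ^ 2 + M * h ^ 3 / 2 / h := by gcongr
    _ = 3 / 4 * M * h ^ 2 := by field_simp; ring

/-- Jump-corrected two-point finite difference across an interface at `x₀`
recovers the one-sided derivative of the smooth piece `f` at the staggered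
point `x_{i+1/2}` to second order in `Δx`. -/
theorem corrected_first_difference_second_order
    (Δx : ℝ) (hΔx : 0 < Δx) (xi : ℝ) (M : ℝ)
    (f g : ℝ → ℝ) (hf : ContDiff ℝ 3 f) (hg : ContDiff ℝ 3 g)
    (hfM : ∀ x ∈ Set.Icc xi (xi + Δx), |iteratedDeriv 3 f x| ≤ M)
    (hgM : ∀ x ∈ Set.Icc xi (xi + Δx), |iteratedDeriv 3 g x| ≤ M)
    (x₀ : ℝ) (hx₀ : x₀ ∈ Set.Ioc (xi + Δx / 2) (xi + Δx))
    (ψ : ℝ → ℝ) (hψ : ∀ x, ψ x = if x < x₀ then f x else g x)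
    (dp : ℝ) (hdp : dp = (xi + Δx) - x₀)
    (jump : ℕ → ℝ)
    (hjump : ∀ m, jump m = iteratedDeriv m g x₀ - iteratedDeriv m f x₀) :
    |deriv f (xi + Δx / 2) -
        ((ψ (xi + Δx) - ψ xi) / Δx -
          (1 / Δx) * ∑ m ∈ Finset.range 3, dp ^ m / (Nat.factorial m : ℝ) * jump m)| ≤
      M * Δx ^ 2 := by
  obtain ⟨hx₀_gt, hx₀_le⟩ := hx₀
  have hM : 0 ≤ M := (abs_nonneg _).trans (hfM xi ⟨le_rfl, by linarith⟩)
  have hdp_nonneg : 0 ≤ dp := by linarith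
  have hdp_le : dp ≤ Δx / 2 := by linarith
  have hψ_left : ψ xi = f xi := by simp [hψ, show xi < x₀ by linarith]
  have hψ_right : ψ (xi + Δx) = g (xi + Δx) := by simp [hψ, hx₀_le.not_gt]
  have hmid := abs_deriv_add_half_sub_slope_le hf hΔx hfM
  have hjump_bound := abs_jump_corrected_sub_le (n := 2) hf hg hx₀_le
    (fun y hy => hfM y ⟨by linarith [hy.1], hy.2⟩) (fun y hy => hgM y ⟨by linarith [hy.1], hy.2⟩)
  simp only [← hdp, ← hjump, factorial] at hjump_bound
  set J := ∑ m ∈ range 3, dp ^ m / (m ! : ℝ) * jump m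
  have hsplit : deriv f (xi + Δx / 2) - ((ψ (xi + Δx) - ψ xi) / Δx - 1 / Δx * J) =
      (deriv f (xi + Δx / 2) - (f (xi + Δx) - f xi) / Δx) -
        ((g (xi + Δx) - J) - f (xi + Δx)) / Δx := by
    rw [hψ_left, hψ_right]; field_simp; ring
  calc _ ≤ 3 / 4 * M * Δx ^ 2 + M * dp ^ 3 / Δx := by
        rw [hsplit]
        refine (abs_sub _ _).trans ?_
        rw [abs_div, abs_of_pos hΔx]
        gcongr
        linarith
    _ ≤ 3 / 4 * M * Δx ^ 2 + M * (Δx / 2) ^ 3 / Δx := by gcongr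
    _ ≤ M * Δx ^ 2 := by field_simp; nlinarith
end

section
/- Let Δx > 0 and let x_{i−1} = x_i − Δx, x_i, x_{i+1} = x_i + Δx be three consecutive grid points. Let f, g : ℝ → ℝ be four times continuously differentiable with |f''''(x)| ≤ M and |g''''(x)| ≤ M for all x ∈ [x_{i−1}, x_{i+1}]. Let x₀ ∈ (x_i, x_{i+1}], define ψ(x) = f(x) for x < x₀ and ψ(x) = g(x) for x ≥ x₀, set d⁺ = x_{i+1} − x₀, and for m = 0, 1, 2, 3 let ⟦ψ^(m)⟧ = g^(m)(x₀) − f^(m)(x₀). Then the jump-corrected three-point second difference satisfies | f''(x_i) − [ (ψ(x_{i+1}) − 2ψ(x_i) + ψ(x_{i−1}))/Δx² − (1/Δx²) Σ_{m=0}^{3} (d⁺)^m/m! · ⟦ψ^(m)⟧ ] | ≤ M·Δx². That is, the standard three-point second-difference stencil, corrected by the truncated generalized Taylor series of the jumps through third order, approximates the one-sided second derivative of f at the grid point x_i on the near side of the interface to second-order accuracy in Δx. -/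
/-!
Add and subtract `f (x_{i+1})`: the corrected stencil splits into the ordinary three-point
second difference of `f`, whose error is `O(Δx²)` because the odd-order Taylor terms of
`f (x_i ± Δx)` cancel, and `Δx⁻²` times the cubic Taylor remainder of `g - f` expanded at the
interface `x₀` and evaluated at `x_{i+1}`, which is `O((d⁺)⁴) = O(Δx⁴)` because the jumps
`⟦ψ^(m)⟧` are exactly the Taylor coefficients of `g - f` at `x₀`.
-/

open Finset Set Nat

theorem taylorWithinEval_univ_eq_sum (f : ℝ → ℝ) (n : ℕ) (a x : ℝ) :
    taylorWithinEval f n univ a x =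
      ∑ m ∈ range (n + 1), (x - a) ^ m / (m ! : ℝ) * iteratedDeriv m f a := by
  simp only [taylor_within_apply, iteratedDerivWithin_univ, smul_eq_mul]
  exact sum_congr rfl fun m _ => by ring

theorem taylorWithinEval_eq_univ_of_contDiff {E : Type*} [NormedAddCommGroup E] [NormedSpace ℝ E]
    {f : ℝ → E} {n : ℕ} (hf : ContDiff ℝ n f) {s : Set ℝ} (hs : UniqueDiffOn ℝ s) {a : ℝ}
    (ha : a ∈ s) (x : ℝ) : taylorWithinEval f n s a x = taylorWithinEval f n univ a x := by
  simp only [taylor_within_apply, iteratedDerivWithin_univ]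
  refine sum_congr rfl fun m hm => ?_
  rw [iteratedDerivWithin_eq_iteratedDeriv hs ((hf.of_le ?_).contDiffAt) ha]
  exact_mod_cast Nat.lt_succ_iff.mp (mem_range.mp hm)

theorem abs_sub_taylorWithinEval_univ_le {f : ℝ → ℝ} {n : ℕ} (hf : ContDiff ℝ (n + 1) f)
    {a x M : ℝ} (hM : ∀ y ∈ uIcc a x, |iteratedDeriv (n + 1) f y| ≤ M) :
    |f x - taylorWithinEval f n univ a x| ≤ M * |x - a| ^ (n + 1) / (n + 1)! := by
  rcases eq_or_ne a x with rfl | hax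
  · simp
  obtain ⟨y, hy, hrem⟩ := taylor_mean_remainder_lagrange_iteratedDeriv hax hf.contDiffOn
  rw [← taylorWithinEval_eq_univ_of_contDiff (hf.of_le (by norm_cast; omega))
    (uniqueDiffOn_uIcc hax) left_mem_uIcc, hrem, abs_div, abs_mul, abs_pow, Nat.abs_cast]
  gcongr
  exact hM y (uIoo_subset_uIcc_self hy)

theorem abs_sub_taylorWithinEval_univ_sub_le {f g : ℝ → ℝ} {n : ℕ} (hf : ContDiff ℝ (n + 1) f)
    (hg : ContDiff ℝ (n + 1) g) {a x M : ℝ}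
    (hfM : ∀ y ∈ uIcc a x, |iteratedDeriv (n + 1) f y| ≤ M)
    (hgM : ∀ y ∈ uIcc a x, |iteratedDeriv (n + 1) g y| ≤ M) :
    |(g - f) x - taylorWithinEval (g - f) n univ a x| ≤ 2 * M * |x - a| ^ (n + 1) / (n + 1)! := by
  refine abs_sub_taylorWithinEval_univ_le (hg.sub hf) fun y hy => ?_
  rw [iteratedDeriv_fun_sub hg.contDiffAt hf.contDiffAt]
  linarith [abs_sub (iteratedDeriv (n + 1) g y) (iteratedDeriv (n + 1) f y), hfM y hy, hgM y hy]

theorem taylorWithinEval_univ_sub_eq_sum {f g : ℝ → ℝ} {n : ℕ} (hf : ContDiff ℝ n f)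
    (hg : ContDiff ℝ n g) (a x : ℝ) :
    taylorWithinEval (g - f) n univ a x =
      ∑ m ∈ range (n + 1),
        (x - a) ^ m / (m ! : ℝ) * (iteratedDeriv m g a - iteratedDeriv m f a) := by
  rw [taylorWithinEval_univ_eq_sum]
  refine sum_congr rfl fun m hm => ?_
  have hmn : (m : WithTop ℕ∞) ≤ n := by exact_mod_cast Nat.lt_succ_iff.mp (mem_range.mp hm)
  rw [iteratedDeriv_sub (hg.of_le hmn).contDiffAt (hf.of_le hmn).contDiffAt]

theorem abs_iteratedDeriv_two_sub_secondDifference_le {f : ℝ → ℝ} (hf : ContDiff ℝ 4 f)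
    {a h M : ℝ} (hh : 0 < h) (hM : ∀ y ∈ Icc (a - h) (a + h), |iteratedDeriv 4 f y| ≤ M) :
    |iteratedDeriv 2 f a - (f (a + h) - 2 * f a + f (a - h)) / h ^ 2| ≤ M * h ^ 2 / 12 := by
  have hright : |f (a + h) - taylorWithinEval f 3 univ a (a + h)| ≤ M * h ^ 4 / 24 := by
    simpa [abs_of_pos hh, Nat.factorial] using abs_sub_taylorWithinEval_univ_le (n := 3) (a := a) hf
      fun y hy => hM y <| uIcc_subset_Icc ⟨by linarith, by linarith⟩ ⟨by linarith, le_rfl⟩ hy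
  have hleft : |f (a - h) - taylorWithinEval f 3 univ a (a - h)| ≤ M * h ^ 4 / 24 := by
    simpa [abs_of_pos hh, Nat.factorial] using abs_sub_taylorWithinEval_univ_le (n := 3) (a := a) hf
      fun y hy => hM y <| uIcc_subset_Icc ⟨by linarith, by linarith⟩ ⟨le_rfl, by linarith⟩ hy
  have hcancel : iteratedDeriv 2 f a - (f (a + h) - 2 * f a + f (a - h)) / h ^ 2 =
      -((f (a + h) - taylorWithinEval f 3 univ a (a + h)) +
        (f (a - h) - taylorWithinEval f 3 univ a (a - h))) / h ^ 2 := by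
    simp only [taylorWithinEval_univ_eq_sum, sum_range_succ, sum_range_zero]
    field_simp
    norm_num [Nat.factorial]
    ring
  rw [hcancel, abs_div, abs_neg, abs_of_pos (pow_pos hh 2), div_le_iff₀ (pow_pos hh 2)]
  linarith [abs_add_le (f (a + h) - taylorWithinEval f 3 univ a (a + h))
    (f (a - h) - taylorWithinEval f 3 univ a (a - h))]

/-- Jump-corrected three-point second difference across an interface at `x₀`
recovers the one-sided second derivative of the smooth piece `f` at the grid
point `x_i` to second order in `Δx`. -/
theorem corrected_second_difference_second_order
    (Δx : ℝ) (hΔx : 0 < Δx) (xi : ℝ) (M : ℝ)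
    (f g : ℝ → ℝ) (hf : ContDiff ℝ 4 f) (hg : ContDiff ℝ 4 g)
    (hfM : ∀ x ∈ Set.Icc (xi - Δx) (xi + Δx), |iteratedDeriv 4 f x| ≤ M)
    (hgM : ∀ x ∈ Set.Icc (xi - Δx) (xi + Δx), |iteratedDeriv 4 g x| ≤ M)
    (x₀ : ℝ) (hx₀ : x₀ ∈ Set.Ioc xi (xi + Δx))
    (ψ : ℝ → ℝ) (hψ : ∀ x, ψ x = if x < x₀ then f x else g x)
    (dp : ℝ) (hdp : dp = (xi + Δx) - x₀)
    (jump : ℕ → ℝ)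
    (hjump : ∀ m, jump m = iteratedDeriv m g x₀ - iteratedDeriv m f x₀) :
    |iteratedDeriv 2 f xi -
        ((ψ (xi + Δx) - 2 * ψ xi + ψ (xi - Δx)) / Δx ^ 2 -
          (1 / Δx ^ 2) * ∑ m ∈ Finset.range 4, dp ^ m / (Nat.factorial m : ℝ) * jump m)| ≤
      M * Δx ^ 2 := by
  obtain ⟨hxi, hx₀Δx⟩ := hx₀
  have hM : 0 ≤ M := (abs_nonneg _).trans (hfM xi ⟨by linarith, by linarith⟩)
  have hψ_right : ψ (xi + Δx) = f (xi + Δx) + (g - f) (xi + Δx) := by simp [hψ, hx₀Δx.not_gt]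
  have hψ_mid : ψ xi = f xi := by simp [hψ, hxi]
  have hψ_left : ψ (xi - Δx) = f (xi - Δx) := by rw [hψ, if_pos (by linarith)]
  have hcorrection : ∑ m ∈ range 4, dp ^ m / (m ! : ℝ) * jump m =
      taylorWithinEval (g - f) 3 univ x₀ (xi + Δx) := by
    rw [taylorWithinEval_univ_sub_eq_sum (n := 3) (hf.of_le (by norm_num))
      (hg.of_le (by norm_num))]
    simp only [hdp, hjump]
  have hstencil := abs_iteratedDeriv_two_sub_secondDifference_le hf hΔx hfM
  have hremainder : |(g - f) (xi + Δx) - taylorWithinEval (g - f) 3 univ x₀ (xi + Δx)| ≤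
      M * Δx ^ 4 / 12 := by
    have hsub : uIcc x₀ (xi + Δx) ⊆ Icc (xi - Δx) (xi + Δx) :=
      uIcc_subset_Icc ⟨by linarith, hx₀Δx⟩ ⟨by linarith, le_rfl⟩
    have hdist : |xi + Δx - x₀| ≤ Δx := abs_le.mpr ⟨by linarith, by linarith⟩
    calc _ ≤ 2 * M * |xi + Δx - x₀| ^ (3 + 1) / (3 + 1)! :=
          abs_sub_taylorWithinEval_univ_sub_le hf hg
            (fun y hy => hfM y (hsub hy)) (fun y hy => hgM y (hsub hy))
      _ ≤ 2 * M * Δx ^ 4 / (3 + 1)! := by gcongr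
      _ = M * Δx ^ 4 / 12 := by norm_num [Nat.factorial]; ring
  rw [hψ_right, hψ_mid, hψ_left, hcorrection]
  calc _ = |(iteratedDeriv 2 f xi - (f (xi + Δx) - 2 * f xi + f (xi - Δx)) / Δx ^ 2) -
        ((g - f) (xi + Δx) - taylorWithinEval (g - f) 3 univ x₀ (xi + Δx)) / Δx ^ 2| := by
        congr 1; field_simp; ring
    _ ≤ M * Δx ^ 2 / 12 + M * Δx ^ 4 / 12 / Δx ^ 2 := by
        grw [abs_sub, abs_div, abs_of_pos (pow_pos hΔx 2), hstencil, hremainder]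
    _ = M * Δx ^ 2 / 6 := by field_simp; ring
    _ ≤ M * Δx ^ 2 := by linarith [mul_nonneg hM (sq_nonneg Δx)]
end

section
/- Let Δt > 0, let Ωⁿ and Ωⁿ⁺¹ ∈ M₃(ℝ) be skew-symmetric matrices, set A = (Δt/4)(Ωⁿ⁺¹ + Ωⁿ), and let Qⁿ ∈ M₃(ℝ) be orthogonal (Qⁿ(Qⁿ)ᵀ = I). Then the implicit midpoint update equation (Qⁿ⁺¹ − Qⁿ)/Δt = (1/4)(Ωⁿ⁺¹ + Ωⁿ)(Qⁿ⁺¹ + Qⁿ) has a unique solution Qⁿ⁺¹ ∈ M₃(ℝ), given by Qⁿ⁺¹ = (I − A)⁻¹(I + A)·Qⁿ; this solution is orthogonal, and det Qⁿ⁺¹ = det Qⁿ. In particular, if Qⁿ is a rotation matrix (orthogonal with determinant 1), then so is Qⁿ⁺¹. -/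
open Matrix

lemma skew_one_sub_isUnit {n : ℕ} (S : Matrix (Fin n) (Fin n) ℝ) (hS : Sᵀ = -S) :
    IsUnit (1 - S) := by
  rw [← Matrix.mulVec_injective_iff_isUnit]
  intro x y hxy
  have hz : (1 - S) *ᵥ (x - y) = 0 := by
    rw [Matrix.mulVec_sub, hxy, sub_self]
  set z := x - y with hzdef
  have h1 : z = S *ᵥ z :=
    sub_eq_zero.mp (by simpa [Matrix.sub_mulVec, Matrix.one_mulVec] using hz)
  have h2 : z ⬝ᵥ (S *ᵥ z) = -(z ⬝ᵥ (S *ᵥ z)) := by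
    conv_lhs => rw [Matrix.dotProduct_mulVec, ← Matrix.mulVec_transpose, hS,
      Matrix.neg_mulVec, neg_dotProduct, dotProduct_comm]
  have h3 : z ⬝ᵥ z = 0 := by
    have h4 : z ⬝ᵥ (S *ᵥ z) = 0 := by linarith
    rw [← h1] at h4
    exact h4
  have hz0 : z = 0 := dotProduct_self_eq_zero.mp h3
  exact sub_eq_zero.mp hz0

lemma rearr {M : Type*} [AddCommGroup M] (a b c d : M) :
    a - b = c + d ↔ a - c = b + d := by
  constructor <;> intro h
  · have : a = c + d + b := by rw [← h]; abel
    rw [this]; abel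
  · have : a = b + d + c := by rw [← h]; abel
    rw [this]; abel

/-- The implicit midpoint update for the rotation matrix,
`(Qⁿ⁺¹ − Qⁿ)/Δt = (1/4)(Ωⁿ⁺¹ + Ωⁿ)(Qⁿ⁺¹ + Qⁿ)` with `Ωⁿ, Ωⁿ⁺¹`
skew-symmetric and `Qⁿ` orthogonal, has the unique solution
`Qⁿ⁺¹ = (I − A)⁻¹(I + A)Qⁿ` with `A = (Δt/4)(Ωⁿ⁺¹ + Ωⁿ)`; this solution is
orthogonal and has the same determinant as `Qⁿ`, so rotations are preserved. -/
theorem implicit_midpoint_rotation_update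
    (Δt : ℝ) (hΔt : 0 < Δt)
    (Ωn Ωn1 Qn : Matrix (Fin 3) (Fin 3) ℝ)
    (hΩn : Ωnᵀ = -Ωn) (hΩn1 : Ωn1ᵀ = -Ωn1)
    (hQn : Qn * Qnᵀ = 1)
    (A : Matrix (Fin 3) (Fin 3) ℝ) (hA : A = (Δt / 4) • (Ωn1 + Ωn)) :
    (∃! Qn1 : Matrix (Fin 3) (Fin 3) ℝ,
        Δt⁻¹ • (Qn1 - Qn) = (4 : ℝ)⁻¹ • ((Ωn1 + Ωn) * (Qn1 + Qn))) ∧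
      Δt⁻¹ • ((1 - A)⁻¹ * (1 + A) * Qn - Qn) =
        (4 : ℝ)⁻¹ • ((Ωn1 + Ωn) * ((1 - A)⁻¹ * (1 + A) * Qn + Qn)) ∧
      ((1 - A)⁻¹ * (1 + A) * Qn) * ((1 - A)⁻¹ * (1 + A) * Qn)ᵀ = 1 ∧
      ((1 - A)⁻¹ * (1 + A) * Qn).det = Qn.det ∧
      (Qn.det = 1 → ((1 - A)⁻¹ * (1 + A) * Qn).det = 1) := by
  have hΔt' : Δt ≠ 0 := ne_of_gt hΔt
  have hAT : Aᵀ = -A := by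
    rw [hA, Matrix.transpose_smul, Matrix.transpose_add, hΩn1, hΩn]
    rw [← neg_add, smul_neg]
  have h1mA : (1 + A)ᵀ = 1 - A := by
    rw [Matrix.transpose_add, Matrix.transpose_one, hAT, sub_eq_add_neg]
  have h1pA : (1 - A)ᵀ = 1 + A := by
    rw [Matrix.transpose_sub, Matrix.transpose_one, hAT, sub_neg_eq_add]
  have hU1 : IsUnit (1 - A) := skew_one_sub_isUnit A hAT
  have hU2 : IsUnit (1 + A) := by
    have h := skew_one_sub_isUnit (-A) (by rw [Matrix.transpose_neg, hAT, neg_neg])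
    simpa [sub_neg_eq_add] using h
  have hd1 : IsUnit (1 - A).det := (Matrix.isUnit_iff_isUnit_det _).mp hU1
  have hd2 : IsUnit (1 + A).det := (Matrix.isUnit_iff_isUnit_det _).mp hU2
  have hinv1 : (1 - A) * (1 - A)⁻¹ = 1 := Matrix.mul_nonsing_inv _ hd1
  have hinv1' : (1 - A)⁻¹ * (1 - A) = 1 := Matrix.nonsing_inv_mul _ hd1
  have hinv2 : (1 + A) * (1 + A)⁻¹ = 1 := Matrix.mul_nonsing_inv _ hd2
  have hΩA : (Ωn1 + Ωn) = (4 / Δt) • A := by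
    rw [hA, smul_smul]
    have : 4 / Δt * (Δt / 4) = 1 := by field_simp
    rw [this, one_smul]
  set B : Matrix (Fin 3) (Fin 3) ℝ := (1 - A)⁻¹ * (1 + A) * Qn with hBdef
  have key : ∀ Q1 : Matrix (Fin 3) (Fin 3) ℝ,
      (Δt⁻¹ • (Q1 - Qn) = (4 : ℝ)⁻¹ • ((Ωn1 + Ωn) * (Q1 + Qn))) ↔
      (1 - A) * Q1 = (1 + A) * Qn := by
    intro Q1
    rw [hΩA, Matrix.smul_mul, smul_smul]
    have h4 : (4 : ℝ)⁻¹ * (4 / Δt) = Δt⁻¹ := by field_simp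
    rw [h4]
    rw [smul_right_inj (inv_ne_zero hΔt')]
    rw [Matrix.mul_add, Matrix.sub_mul, Matrix.add_mul, Matrix.one_mul, Matrix.one_mul]
    exact rearr Q1 Qn (A * Q1) (A * Qn)
  have hB : (1 - A) * B = (1 + A) * Qn := by
    rw [hBdef, ← Matrix.mul_assoc, ← Matrix.mul_assoc, hinv1, Matrix.one_mul]
  have hcomm : (1 + A) * (1 - A) = (1 - A) * (1 + A) := by noncomm_ring
  refine ⟨⟨B, (key B).mpr hB, ?_⟩, (key B).mpr hB, ?_, ?_, ?_⟩
  · intro Q1 hQ1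
    have h := (key Q1).mp hQ1
    calc Q1 = ((1 - A)⁻¹ * (1 - A)) * Q1 := by rw [hinv1', Matrix.one_mul]
      _ = (1 - A)⁻¹ * ((1 - A) * Q1) := by rw [Matrix.mul_assoc]
      _ = (1 - A)⁻¹ * ((1 + A) * Qn) := by rw [h]
      _ = B := by rw [hBdef, Matrix.mul_assoc]
  · -- orthogonality
    calc B * Bᵀ
        = ((1 - A)⁻¹ * (1 + A)) * (Qn * Qnᵀ) * ((1 - A) * (1 + A)⁻¹) := by
          rw [hBdef, Matrix.transpose_mul, Matrix.transpose_mul, h1mA,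
            Matrix.transpose_nonsing_inv, h1pA]
          noncomm_ring
      _ = ((1 - A)⁻¹ * (1 + A)) * ((1 - A) * (1 + A)⁻¹) := by
          rw [hQn, Matrix.mul_one]
      _ = (1 - A)⁻¹ * ((1 + A) * (1 - A)) * (1 + A)⁻¹ := by noncomm_ring
      _ = (1 - A)⁻¹ * ((1 - A) * (1 + A)) * (1 + A)⁻¹ := by rw [hcomm]
      _ = ((1 - A)⁻¹ * (1 - A)) * ((1 + A) * (1 + A)⁻¹) := by noncomm_ring
      _ = 1 := by rw [hinv1', hinv2, Matrix.one_mul]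
  · -- determinant
    have hdet_eq : (1 - A).det = (1 + A).det := by
      rw [← Matrix.det_transpose (1 - A), h1pA]
    have hdB : B.det = (1 - A)⁻¹.det * (1 + A).det * Qn.det := by
      rw [hBdef, Matrix.det_mul, Matrix.det_mul]
    rw [hdB, Matrix.det_nonsing_inv, Ring.inverse_eq_inv', hdet_eq,
      inv_mul_cancel₀ hd2.ne_zero, one_mul]
  · intro h
    have hdet_eq : (1 - A).det = (1 + A).det := by
      rw [← Matrix.det_transpose (1 - A), h1pA]
    rw [hBdef, Matrix.det_mul, Matrix.det_mul, Matrix.det_nonsing_inv,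
      Ring.inverse_eq_inv', hdet_eq, inv_mul_cancel₀ hd2.ne_zero, one_mul, h]
end
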